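/- arXiv:2312.04243 — 6 statements merged into one kernel-verified Lean document; each statement's English description precedes it below -/
import Mathlib

section
/- A sequence n = (n(i))_{i≥0} of non-negative integers with finite support is the degree statistic of some finite rooted plane tree if and only if Σ_{i≥0} n(i) = 1 + Σ_{i≥0} i·n(i). -/
inductive PTree : Type where
  | node : List PTree → PTree

namespace PTree

/-- The number of vertices of a rooted plane tree. -/
def size : PTree → ℕ
  | node ts => 1 + (ts.attach.map (fun x => size x.1)).sum
decreasing_by
  simp only [PTree.node.sizeOf_spec]
  have := List.sizeOf_lt_of_mem x.2
  omega

/-- `degCount i T` is the number of vertices of `T` with exactly `i` children. -/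
def degCount (i : ℕ) : PTree → ℕ
  | node ts => (if ts.length = i then 1 else 0) + (ts.attach.map (fun x => degCount i x.1)).sum
decreasing_by
  simp only [PTree.node.sizeOf_spec]
  have := List.sizeOf_lt_of_mem x.2
  omega

end PTree

/-!
The degree statistic of `T` is the multiplicity function of the multiset `degrees T` of the
numbers of children of its vertices; its total is `card (degrees T)` and its first moment is
`sum (degrees T)`. Every vertex except the root is the child of exactly one vertex, whence
`card = sum + 1`. Conversely, a multiset `D` with `card D = sum D + m` (and `m > 0` unless
`D = 0`) is the degree multiset of a forest of `m` trees: take out a largest element `k`,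
realise the rest by a forest of `k + m - 1` trees, and hang the first `k` of them below a new root.
-/

namespace Multiset

variable {α : Type*}

theorem count_list_sum [DecidableEq α] (a : α) (l : List (Multiset α)) :
    l.sum.count a = (l.map (count a)).sum :=
  map_list_sum (countAddMonoidHom a) l

theorem card_list_sum (l : List (Multiset α)) : card l.sum = (l.map card).sum :=
  map_list_sum cardHom l

theorem sum_list_sum [AddCommMonoid α] (l : List (Multiset α)) : l.sum.sum = (l.map sum).sum :=
  map_list_sum sumAddMonoidHom l

theorem tsum_count [DecidableEq α] (s : Multiset α) : ∑' a, s.count a = card s := by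
  rw [tsum_eq_sum (s := s.toFinset) fun a ha => count_eq_zero.mpr (by simpa using ha),
    toFinset_sum_count_eq]

theorem tsum_mul_count (s : Multiset ℕ) : ∑' i, i * s.count i = s.sum := by
  rw [tsum_eq_sum (s := s.toFinset) fun a ha => by simp [count_eq_zero.mpr (by simpa using ha)],
    Finset.sum_multiset_count]
  simp only [smul_eq_mul, mul_comm]

end Multiset

namespace PTree

@[induction_eliminator]
theorem induction {motive : PTree → Prop}
    (node : ∀ ts, (∀ t ∈ ts, motive t) → motive (node ts)) : ∀ t, motive t
  | .node ts => node ts fun t _ => induction node t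

def degrees : PTree → Multiset ℕ
  | node ts => ts.length ::ₘ (ts.attach.map fun t => degrees t.1).sum
decreasing_by
  simp only [PTree.node.sizeOf_spec]
  have := List.sizeOf_lt_of_mem t.2
  omega

theorem degrees_node (ts : List PTree) :
    degrees (node ts) = ts.length ::ₘ (ts.map degrees).sum := by
  rw [degrees, List.attach_map_val]

theorem degCount_node (i : ℕ) (ts : List PTree) :
    degCount i (node ts) = (if ts.length = i then 1 else 0) + (ts.map (degCount i)).sum := by
  rw [degCount, List.attach_map_val]

theorem count_degrees (i : ℕ) (T : PTree) : (degrees T).count i = degCount i T := by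
  induction T with
  | node ts ih =>
    rw [degrees_node, degCount_node, Multiset.count_cons, Multiset.count_list_sum, List.map_map,
      List.map_congr_left (f := Multiset.count i ∘ degrees) ih, add_comm]
    simp only [eq_comm]

theorem card_degrees (T : PTree) : Multiset.card (degrees T) = (degrees T).sum + 1 := by
  induction T with
  | node ts ih =>
    rw [degrees_node, Multiset.card_cons, Multiset.sum_cons, Multiset.card_list_sum,
      Multiset.sum_list_sum, List.map_map, List.map_map,
      List.map_congr_left (f := Multiset.card ∘ degrees) ih, List.sum_map_add]
    simp only [List.map_const', List.sum_replicate, smul_eq_mul, mul_one, Function.comp_def]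
    omega

theorem exists_forest_degrees_eq (D : Multiset ℕ) (m : ℕ)
    (hcard : Multiset.card D = D.sum + m) (hm : D ≠ 0 → 0 < m) :
    ∃ F : List PTree, F.length = m ∧ (F.map degrees).sum = D := by
  induction hc : Multiset.card D generalizing D m with
  | zero =>
    obtain rfl := Multiset.card_eq_zero.mp hc
    exact ⟨[], by simpa using hcard, rfl⟩
  | succ c ih =>
    have hD : D ≠ 0 := by rintro rfl; simp at hc
    have hm_pos := hm hD
    obtain ⟨k, hkD, hmax⟩ := D.toFinset.exists_max_image id (by simpa using hD)
    obtain ⟨D', rfl⟩ := Multiset.exists_cons_of_mem (Multiset.mem_toFinset.mp hkD)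
    simp only [Multiset.card_cons, Multiset.sum_cons] at hc hcard
    -- `k` is maximal, so `k + m = 1` forces every element of `D` to be `0`, hence `D = {0}`.
    have hm' : D' ≠ 0 → 0 < k + m - 1 := by
      intro hD'
      by_contra! h
      have hk : k = 0 := by omega
      have hsum : D'.sum = 0 := Multiset.sum_eq_zero fun x hx =>
        Nat.le_zero.mp (hk ▸ hmax x (by simp [hx]))
      have := Multiset.card_pos.mpr hD'
      omega
    obtain ⟨F', hlen, hF'⟩ := ih D' (k + m - 1) (by omega) hm' (by omega)
    refine ⟨node (F'.take k) :: F'.drop k,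
      by simp only [List.length_cons, List.length_drop]; omega, ?_⟩
    rw [List.map_cons, List.sum_cons, degrees_node, List.length_take_of_le (by omega),
      Multiset.cons_add, List.map_take, List.map_drop, List.sum_take_add_sum_drop, hF']

theorem exists_degrees_eq_iff (D : Multiset ℕ) :
    (∃ T : PTree, degrees T = D) ↔ Multiset.card D = D.sum + 1 := by
  refine ⟨fun ⟨T, hT⟩ => hT ▸ card_degrees T, fun h => ?_⟩
  obtain ⟨F, hlen, hF⟩ := exists_forest_degrees_eq D 1 h fun _ => one_pos
  obtain ⟨T, rfl⟩ := List.length_eq_one_iff.mp hlen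
  exact ⟨T, by simpa using hF⟩

end PTree

/-- A finitely supported sequence `n` of non-negative integers is the degree statistic of
some rooted plane tree iff `∑_i n(i) = 1 + ∑_i i·n(i)`. -/
theorem stmt_1 (n : ℕ → ℕ) (hfin : {i | n i ≠ 0}.Finite) :
    (∃ T : PTree, ∀ i, T.degCount i = n i) ↔
      ∑' i : ℕ, n i = 1 + ∑' i : ℕ, i * n i := by
  set D := Finsupp.toMultiset (Finsupp.ofSupportFinite n hfin)
  have hD (i : ℕ) : D.count i = n i := by
    rw [Finsupp.count_toMultiset]
    rfl
  have hstat (T : PTree) : (∀ i, T.degCount i = n i) ↔ T.degrees = D := by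
    simp only [Multiset.ext, PTree.count_degrees, hD]
  rw [exists_congr hstat, PTree.exists_degrees_eq_iff]
  simp only [← hD, Multiset.tsum_count, Multiset.tsum_mul_count]
  omega
end

section
/- If degree statistics n_κ satisfy |n_κ| → ∞ and p_i(n_κ) := n_κ(i)/|n_κ| → p_i for every i ≥ 0, where (p_i)_{i≥0} is a probability distribution on the non-negative integers, then Σ_{i≥0} i·p_i ≤ 1. -/
open Filter in
/-- If degree statistics `n_κ` satisfy `|n_κ| → ∞` and `n_κ(i)/|n_κ| → p_i` for each `i`,
where `p` is a probability distribution on `ℕ`, then `∑_i i·p_i ≤ 1`. -/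
theorem stmt_3 (nk : ℕ → ℕ → ℕ)
    (hstat : ∀ κ, {i | nk κ i ≠ 0}.Finite ∧
      ∑' i : ℕ, nk κ i = 1 + ∑' i : ℕ, i * nk κ i)
    (N : ℕ → ℕ) (hN : ∀ κ, N κ = ∑' i : ℕ, nk κ i)
    (hNtop : Tendsto N atTop atTop)
    (p : ℕ → ℝ) (hp0 : ∀ i, 0 ≤ p i) (hp1 : HasSum p 1)
    (hconv : ∀ i, Tendsto (fun κ => (nk κ i : ℝ) / (N κ : ℝ)) atTop (nhds (p i))) :
    Summable (fun i : ℕ => (i : ℝ) * p i) ∧ ∑' i : ℕ, (i : ℝ) * p i ≤ 1 := by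
  have key : ∀ n : ℕ, ∑ i ∈ Finset.range n, (i : ℝ) * p i ≤ 1 := by
    intro n
    have hlim : Tendsto
        (fun κ => ∑ i ∈ Finset.range n, (i : ℝ) * ((nk κ i : ℝ) / (N κ : ℝ))) atTop
        (nhds (∑ i ∈ Finset.range n, (i : ℝ) * p i)) :=
      tendsto_finset_sum _ (fun i _ => (hconv i).const_mul _)
    refine le_of_tendsto hlim ?_
    filter_upwards [hNtop.eventually_ge_atTop 1] with κ hκ
    have hS2 : Summable (fun i => i * nk κ i) := by
      refine summable_of_ne_finset_zero (s := (hstat κ).1.toFinset) ?_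
      intro i hi
      simp only [Set.Finite.mem_toFinset, Set.mem_setOf_eq, not_not] at hi
      simp [hi]
    have hle : ∑ i ∈ Finset.range n, i * nk κ i ≤ N κ := by
      calc ∑ i ∈ Finset.range n, i * nk κ i
          ≤ ∑' i, i * nk κ i := Summable.sum_le_tsum _ (fun _ _ => Nat.zero_le _) hS2
        _ ≤ N κ := by rw [hN κ, (hstat κ).2]; omega
    have hNpos : (0:ℝ) < N κ := by exact_mod_cast hκ
    calc ∑ i ∈ Finset.range n, (i:ℝ) * ((nk κ i : ℝ) / (N κ : ℝ))
        = (∑ i ∈ Finset.range n, (i:ℝ) * (nk κ i : ℝ)) / N κ := by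
          rw [Finset.sum_div]; exact Finset.sum_congr rfl (fun i _ => by ring)
      _ ≤ 1 := by
          rw [div_le_one hNpos]
          exact_mod_cast hle
  have hnn : ∀ i : ℕ, 0 ≤ (i:ℝ) * p i := fun i => mul_nonneg (Nat.cast_nonneg i) (hp0 i)
  exact ⟨summable_of_sum_range_le hnn key, Summable.tsum_le_of_sum_range_le (summable_of_sum_range_le hnn key) key⟩
end

section
/- The number of rooted plane trees with a given degree statistic n equals (1/|n|) · |n|! / ∏_{i≥0} n(i)!. -/
namespace PlaneAux

/-- number of vertices of out-degree `i` in a forest -/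
def fcnt (i : ℕ) (l : List PTree) : ℕ := (l.map (PTree.degCount i)).sum

lemma degCount_node (i : ℕ) (ts : List PTree) :
    PTree.degCount i (PTree.node ts) = (if ts.length = i then 1 else 0) + fcnt i ts := by
  rw [PTree.degCount, fcnt]
  simp

lemma fcnt_cons (i : ℕ) (T : PTree) (l : List PTree) :
    fcnt i (T :: l) = PTree.degCount i T + fcnt i l := by simp [fcnt]

lemma fcnt_append (i : ℕ) (l1 l2 : List PTree) :
    fcnt i (l1 ++ l2) = fcnt i l1 + fcnt i l2 := by simp [fcnt]

/-- forests of `k` trees with degree statistic `n` -/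
def FS (k : ℕ) (n : ℕ →₀ ℕ) : Set (List PTree) :=
  {l | l.length = k ∧ ∀ i, fcnt i l = n i}

lemma ncard_biUnion {α β : Type*} [DecidableEq β] (s : Finset β) (f : β → Set α)
    (hf : ∀ b ∈ s, (f b).Finite)
    (hd : ∀ b1 ∈ s, ∀ b2 ∈ s, b1 ≠ b2 → Disjoint (f b1) (f b2)) :
    (⋃ b ∈ s, f b).ncard = ∑ b ∈ s, (f b).ncard := by
  induction s using Finset.induction with
  | empty => simp
  | @insert a s hb ih =>
    rw [Finset.sum_insert hb, Finset.set_biUnion_insert]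
    have hfin : (⋃ x ∈ s, f x).Finite :=
      Set.Finite.biUnion s.finite_toSet (fun b hbs => hf b (Finset.mem_insert_of_mem hbs))
    have hdisj : Disjoint (f a) (⋃ x ∈ s, f x) := by
      rw [Set.disjoint_iUnion_right]
      intro i
      rw [Set.disjoint_iUnion_right]
      intro hi
      exact hd a (Finset.mem_insert_self a s) i (Finset.mem_insert_of_mem hi)
        (fun h => hb (h ▸ hi))
    rw [Set.ncard_union_eq hdisj (hf a (Finset.mem_insert_self a s)) hfin,
      ih (fun b hbs => hf b (Finset.mem_insert_of_mem hbs))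
        (fun b1 h1 b2 h2 hne => hd b1 (Finset.mem_insert_of_mem h1) b2 (Finset.mem_insert_of_mem h2) hne)]

end PlaneAux

namespace PlaneAux

lemma support_sub_subset (n : ℕ →₀ ℕ) (d : ℕ) :
    (n - Finsupp.single d 1).support ⊆ n.support := by
  intro i hi
  simp only [Finsupp.mem_support_iff, Finsupp.tsub_apply] at hi ⊢
  omega

lemma main (N : ℕ) : ∀ (n : ℕ →₀ ℕ) (k : ℕ),
    n.sum (fun _ m => m) = N → N = k + n.sum (fun i m => i * m) →
    (FS k n).Finite ∧
      ((FS k n).ncard : ℚ) * N * (n.prod fun _ m => (m.factorial : ℚ))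
        = k * N.factorial := by
  induction N using Nat.strong_induction_on with
  | _ N IH =>
  intro n k hsum hdeg
  match k with
  | 0 =>
    have hfin : (FS 0 n).Finite := by
      apply Set.Finite.subset (Set.finite_singleton ([] : List PTree))
      intro l hl
      simp only [FS, Set.mem_setOf_eq] at hl
      simp [List.eq_nil_of_length_eq_zero hl.1]
    refine ⟨hfin, ?_⟩
    rcases Nat.eq_zero_or_pos N with hN | hN
    · subst hN; simp
    · have hempty : FS 0 n = ∅ := by
        ext l
        simp only [FS, Set.mem_setOf_eq, Set.mem_empty_iff_false, iff_false, not_and]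
        intro hl hc
        have hl0 : l = [] := List.eq_nil_of_length_eq_zero hl
        subst hl0
        have hn0 : n = 0 := by
          ext i
          have := hc i
          simpa [fcnt] using this.symm
        rw [hn0] at hsum
        simp at hsum
        omega
      rw [hempty]
      simp
  | (k' + 1) =>
    set M := n.sum (fun i m => i * m) with hM
    have hsupN : ∑ i ∈ n.support, n i = N := hsum
    have hsupM : ∑ i ∈ n.support, i * n i = M := rfl
    rcases eq_or_lt_of_le (show 1 ≤ N by omega) with hN1 | hN2
    · -- base case N = 1, k' = 0
      have hk0 : k' = 0 ∧ M = 0 := by omega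
      obtain ⟨hk0, hM0⟩ := hk0
      subst hk0
      have hzero : ∀ i, i ≠ 0 → n i = 0 := by
        intro i hi
        by_contra hne
        have hmem : i ∈ n.support := Finsupp.mem_support_iff.mpr hne
        have := Finset.sum_eq_zero_iff.mp (hsupM.trans hM0) i hmem
        rcases Nat.mul_eq_zero.mp this with h | h
        · exact hi h
        · exact hne h
      have hn : n = Finsupp.single 0 1 := by
        have hss : n.support ⊆ {0} := by
          intro i hi
          rw [Finset.mem_singleton]
          by_contra h
          exact (Finsupp.mem_support_iff.mp hi) (hzero i h)
        have h0 : n 0 = 1 := by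
          have := Finsupp.sum_of_support_subset n hss (fun _ m => m) (by simp)
          rw [hsum, ← hN1] at this
          simpa using this.symm
        ext i
        rcases eq_or_ne i 0 with rfl | hi
        · simpa using h0
        · rw [hzero i hi, Finsupp.single_apply, if_neg (by omega)]
      have hset : FS 1 n = {[PTree.node []]} := by
        ext l
        simp only [FS, Set.mem_setOf_eq, Set.mem_singleton_iff]
        constructor
        · rintro ⟨hlen, hc⟩
          obtain ⟨T, rfl⟩ := List.length_eq_one_iff.mp hlen
          obtain ⟨ts⟩ := T
          rcases ts with _ | ⟨T0, ts'⟩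
          · rfl
          · exfalso
            have := hc (T0 :: ts').length
            rw [fcnt_cons, degCount_node, if_pos rfl, hn, Finsupp.single_apply,
              if_neg (by simp)] at this
            simp [fcnt] at this
        · rintro rfl
          refine ⟨rfl, fun i => ?_⟩
          rw [fcnt_cons, degCount_node, hn, Finsupp.single_apply]
          simp [fcnt]
      rw [hset, hn]
      refine ⟨Set.finite_singleton _, ?_⟩
      rw [Set.ncard_singleton, ← hN1]
      rw [Finsupp.prod_single_index (by norm_num)]
      norm_num [Nat.factorial]
    · -- inductive step: N ≥ 2
      -- facts for each d in the support
      have key : ∀ d ∈ n.support,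
          (FS (k' + d) (n - Finsupp.single d 1)).Finite ∧
          ((FS (k' + d) (n - Finsupp.single d 1)).ncard : ℚ) *
              (n.prod fun _ m => (m.factorial : ℚ)) * ((N : ℚ) - 1)
            = (n d : ℚ) * ((k' : ℚ) + d) * ((N - 1).factorial : ℚ) := by
        intro d hd
        have hnd : n d ≠ 0 := Finsupp.mem_support_iff.mp hd
        have hdM : d ≤ M := by
          calc d ≤ d * n d := Nat.le_mul_of_pos_right d (by omega)
          _ ≤ M := hsupM ▸ Finset.single_le_sum (f := fun i => i * n i)
              (fun i _ => Nat.zero_le _) hd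
        have hsingle : ∑ i ∈ n.support, (Finsupp.single d 1 : ℕ →₀ ℕ) i = 1 := by
          have : ∀ i ∈ n.support, (Finsupp.single d 1 : ℕ →₀ ℕ) i
              = if d = i then 1 else 0 := fun i _ => Finsupp.single_apply
          rw [Finset.sum_congr rfl this, Finset.sum_ite_eq, if_pos hd]
        have hsingle' : ∑ i ∈ n.support, i * (Finsupp.single d 1 : ℕ →₀ ℕ) i = d := by
          have : ∀ i ∈ n.support, i * (Finsupp.single d 1 : ℕ →₀ ℕ) i
              = if d = i then i else 0 := by
            intro i _
            rw [Finsupp.single_apply]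
            split <;> simp_all
          rw [Finset.sum_congr rfl this, Finset.sum_ite_eq, if_pos hd]
        have hle : ∀ i ∈ n.support, (Finsupp.single d 1 : ℕ →₀ ℕ) i ≤ n i := by
          intro i _
          rcases eq_or_ne d i with rfl | h
          · rw [Finsupp.single_apply, if_pos rfl]
            omega
          · rw [Finsupp.single_apply, if_neg h]
            omega
        have hsum' : (n - Finsupp.single d 1).sum (fun _ m => m) = N - 1 := by
          rw [Finsupp.sum_of_support_subset _ (support_sub_subset n d) _ (by simp)]
          have : ∀ i ∈ n.support, (n - Finsupp.single d 1 : ℕ →₀ ℕ) i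
              = n i - (Finsupp.single d 1 : ℕ →₀ ℕ) i := fun i _ => Finsupp.tsub_apply _ _ _
          rw [Finset.sum_congr rfl this, Finset.sum_tsub_distrib n.support hle, hsupN, hsingle]
        have hdeg' : N - 1 = (k' + d) + (n - Finsupp.single d 1).sum (fun i m => i * m) := by
          have hw : (n - Finsupp.single d 1).sum (fun i m => i * m) = M - d := by
            rw [Finsupp.sum_of_support_subset _ (support_sub_subset n d) _ (by simp)]
            have : ∀ i ∈ n.support, i * (n - Finsupp.single d 1 : ℕ →₀ ℕ) i
                = i * n i - i * (Finsupp.single d 1 : ℕ →₀ ℕ) i := by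
              intro i _
              rw [Finsupp.tsub_apply, Nat.mul_sub]
            rw [Finset.sum_congr rfl this,
              Finset.sum_tsub_distrib n.support (fun i hi => Nat.mul_le_mul_left i (hle i hi)),
              hsupM, hsingle']
          rw [hw]
          omega
        obtain ⟨hfin', heq'⟩ := IH (N - 1) (by omega) _ _ hsum' hdeg'
        refine ⟨hfin', ?_⟩
        have hprod : (n - Finsupp.single d 1).prod (fun _ m => (m.factorial : ℚ)) * (n d : ℚ)
            = n.prod fun _ m => (m.factorial : ℚ) := by
          rw [Finsupp.prod_of_support_subset _ (support_sub_subset n d) _ (by norm_num),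
            Finsupp.prod, ← Finset.mul_prod_erase n.support
              (fun i => (((n - Finsupp.single d 1 : ℕ →₀ ℕ) i).factorial : ℚ)) hd,
            ← Finset.mul_prod_erase n.support (fun i => ((n i).factorial : ℚ)) hd]
          have herase : ∏ i ∈ n.support.erase d, (((n - Finsupp.single d 1 : ℕ →₀ ℕ) i).factorial : ℚ)
              = ∏ i ∈ n.support.erase d, ((n i).factorial : ℚ) := by
            refine Finset.prod_congr rfl fun i hi => ?_
            have hne : d ≠ i := fun h => (Finset.ne_of_mem_erase hi) h.symm
            rw [Finsupp.tsub_apply, Finsupp.single_apply, if_neg hne]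
            simp
          rw [herase]
          have hfac : (((n - Finsupp.single d 1 : ℕ →₀ ℕ) d).factorial : ℚ) * (n d : ℚ)
              = ((n d).factorial : ℚ) := by
            rw [Finsupp.tsub_apply, Finsupp.single_apply, if_pos rfl]
            rw [← Nat.cast_mul]
            norm_cast
            rw [Nat.mul_comm, Nat.mul_factorial_pred (by omega)]
          rw [mul_right_comm, hfac, mul_comm]
        rw [← hprod]
        have hcastN : ((N - 1 : ℕ) : ℚ) = (N : ℚ) - 1 := by
          have : (1:ℕ) ≤ N := by omega
          push_cast [this]
          ring
        rw [← hcastN]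
        push_cast at heq' ⊢
        nlinarith [heq']
      have hunion : FS (k' + 1) n = ⋃ d ∈ n.support,
          (fun l => PTree.node (l.take d) :: l.drop d) ''
            FS (k' + d) (n - Finsupp.single d 1) := by
        ext l
        simp only [Set.mem_iUnion, Set.mem_image, exists_prop]
        constructor
        · rintro ⟨hlen, hc⟩
          rcases l with _ | ⟨T, rest⟩
          · simp at hlen
          obtain ⟨ts⟩ := T
          have hrest : rest.length = k' := by simpa using hlen
          have hnd : n ts.length ≠ 0 := by
            have := hc ts.length
            rw [fcnt_cons, degCount_node, if_pos rfl] at this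
            omega
          refine ⟨ts.length, Finsupp.mem_support_iff.mpr hnd, ts ++ rest, ⟨?_, ?_⟩, ?_⟩
          · rw [List.length_append]
            omega
          · intro i
            have hci := hc i
            rw [fcnt_cons, degCount_node] at hci
            rw [fcnt_append, Finsupp.tsub_apply, Finsupp.single_apply]
            rcases eq_or_ne ts.length i with h | h
            · rw [if_pos h] at hci ⊢
              omega
            · rw [if_neg h] at hci ⊢
              omega
          · show PTree.node ((ts ++ rest).take ts.length) :: (ts ++ rest).drop ts.length
              = PTree.node ts :: rest
            rw [List.take_left, List.drop_left]
        · rintro ⟨d, hd, m, ⟨hmlen, hmc⟩, rfl⟩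
          have hnd : n d ≠ 0 := Finsupp.mem_support_iff.mp hd
          have hdle : d ≤ m.length := by omega
          refine ⟨?_, ?_⟩
          · show (PTree.node (m.take d) :: m.drop d).length = k' + 1
            rw [List.length_cons, List.length_drop]
            omega
          · intro i
            have hmi := hmc i
            rw [Finsupp.tsub_apply, Finsupp.single_apply] at hmi
            have htd : (m.take d).length = d := by
              rw [List.length_take]
              omega
            show fcnt i (PTree.node (m.take d) :: m.drop d) = n i
            rw [fcnt_cons, degCount_node, htd]
            have hsplit : fcnt i (m.take d) + fcnt i (m.drop d) = fcnt i m := by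
              rw [← fcnt_append, List.take_append_drop]
            rcases eq_or_ne d i with h | h
            · rw [if_pos h]
              rw [if_pos h] at hmi
              subst h
              omega
            · rw [if_neg h]
              rw [if_neg h] at hmi
              omega
      have hdisj : ∀ d1 ∈ n.support, ∀ d2 ∈ n.support, d1 ≠ d2 →
          Disjoint
            ((fun l => PTree.node (l.take d1) :: l.drop d1) ''
              FS (k' + d1) (n - Finsupp.single d1 1))
            ((fun l => PTree.node (l.take d2) :: l.drop d2) ''
              FS (k' + d2) (n - Finsupp.single d2 1)) := by
        intro d1 _ d2 _ hne
        rw [Set.disjoint_left]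
        rintro x ⟨m1, ⟨h1len, _⟩, rfl⟩ ⟨m2, ⟨h2len, _⟩, h⟩
        apply hne
        have e1 : (m1.take d1).length = d1 := by
          rw [List.length_take]
          omega
        have e2 : (m2.take d2).length = d2 := by
          rw [List.length_take]
          omega
        simp only at h
        injection h with h1 h2
        injection h1 with h3
        rw [← e1, ← e2, h3]
      have hinj : ∀ d, Set.InjOn (fun l => PTree.node (l.take d) :: l.drop d)
          (FS (k' + d) (n - Finsupp.single d 1)) := by
        intro d a _ b _ h
        simp only at h
        injection h with h1 h2
        injection h1 with h3
        rw [← List.take_append_drop d a, ← List.take_append_drop d b, h3, h2]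
      have hfin : (FS (k' + 1) n).Finite := by
        rw [hunion]
        exact Set.Finite.biUnion n.support.finite_toSet
          (fun d hd => ((key d hd).1).image _)
      refine ⟨hfin, ?_⟩
      have hcard : (FS (k' + 1) n).ncard
          = ∑ d ∈ n.support, (FS (k' + d) (n - Finsupp.single d 1)).ncard := by
        rw [hunion, ncard_biUnion n.support _ (fun d hd => ((key d hd).1).image _) hdisj]
        exact Finset.sum_congr rfl fun d _ => Set.ncard_image_of_injOn (hinj d)
      have hmain : ((FS (k' + 1) n).ncard : ℚ) * (n.prod fun _ m => (m.factorial : ℚ))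
            * ((N : ℚ) - 1)
          = ((N - 1).factorial : ℚ) * ∑ d ∈ n.support, (n d : ℚ) * ((k' : ℚ) + d) := by
        rw [hcard]
        push_cast
        rw [Finset.sum_mul, Finset.sum_mul, Finset.mul_sum]
        exact Finset.sum_congr rfl fun d hd => by linear_combination (key d hd).2
      have hsum2 : ∑ d ∈ n.support, (n d : ℚ) * ((k' : ℚ) + d)
          = ((k' : ℚ) + 1) * ((N : ℚ) - 1) := by
        have hnat : ∑ d ∈ n.support, n d * (k' + d) = k' * N + M := by
          have hterm : ∀ d ∈ n.support, n d * (k' + d) = k' * n d + d * n d :=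
            fun d _ => by ring
          rw [Finset.sum_congr rfl hterm, Finset.sum_add_distrib, ← Finset.mul_sum,
            hsupN, hsupM]
        have hcast : ∑ d ∈ n.support, (n d : ℚ) * ((k' : ℚ) + d)
            = ((k' * N + M : ℕ) : ℚ) := by
          rw [← hnat]
          push_cast
          ring
        rw [hcast]
        have hNQ : (N : ℚ) = (k' : ℚ) + 1 + (M : ℚ) := by
          exact_mod_cast congrArg (Nat.cast (R := ℚ)) hdeg
        push_cast
        linear_combination -hNQ
      have hfact : (N : ℚ) * (((N - 1).factorial : ℕ) : ℚ) = (N.factorial : ℚ) := by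
        rw [← Nat.cast_mul, Nat.mul_factorial_pred (by omega)]
      have hN1 : (N : ℚ) - 1 ≠ 0 := by
        have : (2 : ℚ) ≤ (N : ℚ) := by exact_mod_cast hN2
        linarith
      rw [hsum2] at hmain
      have hLP : ((FS (k' + 1) n).ncard : ℚ) * (n.prod fun _ m => (m.factorial : ℚ))
          = ((N - 1).factorial : ℚ) * ((k' : ℚ) + 1) := by
        apply mul_right_cancel₀ hN1
        linear_combination hmain
      push_cast
      linear_combination (N : ℚ) * hLP + ((k' : ℚ) + 1) * hfact

end PlaneAux

/-- The number of rooted plane trees with degree statistic `n` equals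
`(1/|n|) · |n|! / ∏_i n(i)!`. -/
theorem stmt_4 (n : ℕ →₀ ℕ)
    (hdeg : n.sum (fun _ k => k) = 1 + n.sum (fun i k => i * k))
    (𝕋 : Finset PTree) (h𝕋 : ∀ T, T ∈ 𝕋 ↔ ∀ i, T.degCount i = n i) :
    (𝕋.card : ℚ) = (1 / (n.sum (fun _ k => k) : ℚ)) *
      (Nat.factorial (n.sum (fun _ k => k)) : ℚ) /
        (n.prod fun _ k => (Nat.factorial k : ℚ)) := by
  obtain ⟨hfin, heq⟩ := PlaneAux.main (n.sum (fun _ k => k)) n 1 rfl hdeg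
  have hset : PlaneAux.FS 1 n = (fun T => [T]) '' ↑𝕋 := by
    ext l
    simp only [Set.mem_image, Finset.mem_coe, PlaneAux.FS, Set.mem_setOf_eq]
    constructor
    · rintro ⟨hlen, hc⟩
      obtain ⟨T, rfl⟩ := List.length_eq_one_iff.mp hlen
      exact ⟨T, (h𝕋 T).mpr (fun i => by simpa [PlaneAux.fcnt] using hc i), rfl⟩
    · rintro ⟨T, hT, rfl⟩
      exact ⟨rfl, fun i => by simpa [PlaneAux.fcnt] using (h𝕋 T).mp hT i⟩
  have hcard : (PlaneAux.FS 1 n).ncard = 𝕋.card := by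
    rw [hset, Set.ncard_image_of_injective _ (fun a b h => by injection h),
      Set.ncard_coe_finset]
  rw [hcard] at heq
  have hNpos : 0 < n.sum (fun _ k => k) := by omega
  have hNne : ((n.sum (fun _ k => k) : ℕ) : ℚ) ≠ 0 := by exact_mod_cast hNpos.ne'
  have hQ : (n.sum fun _ k => (k : ℚ)) = ((n.sum (fun _ k => k) : ℕ) : ℚ) := by
    rw [Finsupp.sum, Finsupp.sum, Nat.cast_sum]
  have hPne : (n.prod fun _ k => (Nat.factorial k : ℚ)) ≠ 0 := by
    rw [Finsupp.prod]
    apply ne_of_gt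
    apply Finset.prod_pos
    intro i _
    have := Nat.factorial_pos (n i)
    positivity
  rw [hQ]
  set X := ((n.sum (fun _ k => k) : ℕ) : ℚ) with hX
  set P := (n.prod fun _ k => (Nat.factorial k : ℚ)) with hP
  rw [eq_div_iff hPne, one_div, inv_mul_eq_div, eq_div_iff hNne]
  linear_combination heq
end

section
/- If x ≥ 1 is a real number and 0 ≤ k ≤ x/2 is an integer, then the falling factorial satisfies (x)_k = x^k · exp(−k(k−1)/(2x) + O(k³/x²)); more precisely, there is an absolute constant C such that |log((x)_k / x^k) + k(k−1)/(2x)| ≤ C k³/x² for all such x, k. -/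
/-!
Since `(x)_k / x^k = ∏_{i<k} (1 - i/x)`, the logarithm is `∑_{i<k} log (1 - i/x)`. Every `i/x` lies
in `[0, 1/2]`, so each term is `-i/x` up to an error of at most `2 (i/x)^2 ≤ 2 (k/x)^2`; the linear
terms add up to `-k(k-1)/(2x)` and the `k` errors to at most `2 k^3/x^2`.
-/

open Finset Real

theorem Real.abs_log_one_sub_add_le {y : ℝ} (hy : |y| ≤ 1 / 2) :
    |log (1 - y) + y| ≤ 2 * y ^ 2 := by
  have h := abs_log_sub_add_sum_range_le (hy.trans_lt one_half_lt_one) 1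
  rw [sum_range_one, zero_add, pow_one, Nat.cast_zero, zero_add, div_one, add_comm] at h
  calc |log (1 - y) + y| ≤ |y| ^ 2 / (1 - |y|) := h
    _ ≤ |y| ^ 2 / (1 / 2) := by gcongr; linarith
    _ = 2 * y ^ 2 := by rw [sq_abs]; ring

theorem Real.abs_log_prod_one_sub_add_sum_le {ι : Type*} (s : Finset ι) (y : ι → ℝ)
    (hy : ∀ i ∈ s, |y i| ≤ 1 / 2) :
    |log (∏ i ∈ s, (1 - y i)) + ∑ i ∈ s, y i| ≤ 2 * ∑ i ∈ s, y i ^ 2 := by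
  have hpos : ∀ i ∈ s, 1 - y i ≠ 0 := fun i hi => by
    have := (abs_le.mp (hy i hi)).2
    linarith
  rw [log_prod hpos, ← sum_add_distrib, mul_sum]
  exact (abs_sum_le_sum_abs _ _).trans
    (sum_le_sum fun i hi => abs_log_one_sub_add_le (hy i hi))

theorem descPochhammer_eval_div_pow {K : Type*} [Field K] (k : ℕ) {x : K} (hx : x ≠ 0) :
    (descPochhammer K k).eval x / x ^ k = ∏ i ∈ range k, (1 - i / x) := by
  rw [descPochhammer_eval_eq_prod_range, ← card_range k, ← prod_const, card_range,
    ← prod_div_distrib]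
  exact prod_congr rfl fun i _ => by rw [sub_div, div_self hx]

theorem Finset.sum_range_natCast_mul_two {R : Type*} [CommRing R] (n : ℕ) :
    (∑ i ∈ range n, (i : R)) * 2 = n * (n - 1) := by
  induction n with
  | zero => simp
  | succ n ih => rw [sum_range_succ, add_mul, ih]; push_cast; ring

/-- There is an absolute constant `C` such that for every real `x ≥ 1` and integer
`0 ≤ k ≤ x/2`, `|log((x)_k / x^k) + k(k-1)/(2x)| ≤ C k³/x²`. -/
theorem stmt_9 : ∃ C : ℝ, 0 < C ∧ ∀ (x : ℝ) (k : ℕ), 1 ≤ x → (k : ℝ) ≤ x / 2 →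
    |Real.log ((descPochhammer ℝ k).eval x / x ^ k) + (k : ℝ) * ((k : ℝ) - 1) / (2 * x)|
      ≤ C * (k : ℝ) ^ 3 / x ^ 2 := by
  refine ⟨2, two_pos, fun x k hx hk => ?_⟩
  have hx0 : 0 < x := by linarith
  have hsmall : ∀ i ∈ range k, |(i : ℝ) / x| ≤ 1 / 2 := fun i hi => by
    have hik : (i : ℝ) ≤ k := by exact_mod_cast (mem_range.mp hi).le
    rw [abs_of_nonneg (by positivity), div_le_iff₀ hx0]
    linarith
  have hlinear : (k : ℝ) * (k - 1) / (2 * x) = ∑ i ∈ range k, (i : ℝ) / x := by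
    rw [← sum_div, ← sum_range_natCast_mul_two, mul_comm (2 : ℝ) x,
      mul_div_mul_right _ _ two_ne_zero]
  have hquadratic : 2 * ∑ i ∈ range k, ((i : ℝ) / x) ^ 2 ≤ 2 * (k : ℝ) ^ 3 / x ^ 2 :=
    calc 2 * ∑ i ∈ range k, ((i : ℝ) / x) ^ 2 ≤ 2 * ∑ _i ∈ range k, ((k : ℝ) / x) ^ 2 := by
          gcongr with i hi
          exact (mem_range.mp hi).le
      _ = 2 * (k : ℝ) ^ 3 / x ^ 2 := by
          rw [sum_const, card_range, nsmul_eq_mul]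
          ring
  rw [descPochhammer_eval_div_pow k hx0.ne', hlinear]
  exact (abs_log_prod_one_sub_add_sum_le _ _ hsmall).trans hquadratic
end

section
/- Let a ≥ b > k > 0 be real numbers with k an integer. Then k·ln(a/b) ≤ ln((a)_k/(b)_k) ≤ k·ln((a−k)/(b−k)) ≤ k·ln(a/b)/(1 − k/b). -/
/-!
Writing `(a)_k / (b)_k = ∏_{i<k} (a - i) / (b - i)`, each factor lies between `a / b` and
`(a - k) / (b - k)` because `c ↦ (a - c) / (b - c)` increases on `c < b` when `b ≤ a`; summing
logarithms gives the first two inequalities. The last one says `(b - k) log ((a - k) / (b - k))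
≤ b log (a / b)`, an instance of the monotonicity of `t ↦ t log ((t + x) / t)`, which follows from
the concavity of `log` and `log 1 = 0`.
-/

open Real Finset

lemma monotoneOn_sub_div_sub {K : Type*} [Field K] [LinearOrder K] [IsStrictOrderedRing K]
    {a b : K} (hab : b ≤ a) : MonotoneOn (fun c => (a - c) / (b - c)) (Set.Iio b) := by
  intro c hc d hd hcd
  have hc' : 0 < b - c := sub_pos.2 hc
  have hd' : 0 < b - d := sub_pos.2 hd
  rw [div_le_div_iff₀ hc' hd']
  nlinarith [mul_nonneg (sub_nonneg.2 hcd) (sub_nonneg.2 hab)]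

lemma mul_log_add_div_self_le {s t x : ℝ} (hs : 0 < s) (hst : s ≤ t) (hx : 0 ≤ x) :
    s * log ((s + x) / s) ≤ t * log ((t + x) / t) := by
  have ht : 0 < t := hs.trans_le hst
  have hconcave : (s / t) • log ((s + x) / s) + (1 - s / t) • log 1 ≤
      log ((s / t) • ((s + x) / s) + (1 - s / t) • (1 : ℝ)) :=
    strictConcaveOn_log_Ioi.concaveOn.2 (Set.mem_Ioi.2 (by positivity)) (Set.mem_Ioi.2 one_pos)
      (by positivity) (sub_nonneg.2 (div_le_one_of_le₀ hst ht.le)) (by ring)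
  have hcomb : (s / t) • ((s + x) / s) + (1 - s / t) • (1 : ℝ) = (t + x) / t := by
    simp only [smul_eq_mul]
    field_simp
    ring
  rw [hcomb, smul_eq_mul, smul_eq_mul, log_one, mul_zero, add_zero] at hconcave
  calc s * log ((s + x) / s) = t * (s / t * log ((s + x) / s)) := by field_simp
    _ ≤ t * log ((t + x) / t) := by gcongr

lemma mul_log_sub_div_sub_le {a b c : ℝ} (hc : 0 ≤ c) (hcb : c < b) (hab : b ≤ a) :
    c * log ((a - c) / (b - c)) ≤ c * log (a / b) / (1 - c / b) := by
  have hb : 0 < b := hc.trans_lt hcb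
  have hbc : 0 < b - c := sub_pos.2 hcb
  have key := mul_log_add_div_self_le hbc (sub_le_self b hc) (sub_nonneg.2 hab)
  rw [show b - c + (a - b) = a - c by ring, show b + (a - b) = a by ring] at key
  rw [show 1 - c / b = (b - c) / b by field_simp, le_div_iff₀ (div_pos hbc hb)]
  calc c * log ((a - c) / (b - c)) * ((b - c) / b)
      = c / b * ((b - c) * log ((a - c) / (b - c))) := by ring
    _ ≤ c / b * (b * log (a / b)) := by gcongr
    _ = c * log (a / b) := by field_simp

lemma log_descPochhammer_eval_div_eq_sum {a b : ℝ} {k : ℕ} (hkb : (k : ℝ) - 1 < b)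
    (hab : b ≤ a) :
    log ((descPochhammer ℝ k).eval a / (descPochhammer ℝ k).eval b) =
      ∑ i ∈ range k, log ((a - i) / (b - i)) := by
  rw [descPochhammer_eval_eq_prod_range, descPochhammer_eval_eq_prod_range,
    ← prod_div_distrib, log_prod]
  intro i hi
  have hi : (i : ℝ) + 1 ≤ k := by exact_mod_cast mem_range.1 hi
  exact div_ne_zero (by linarith) (by linarith)

theorem stmt_10_general (a b : ℝ) (k : ℕ) (hbk : (k : ℝ) < b) (hab : b ≤ a) :
    (k : ℝ) * Real.log (a / b) ≤
        Real.log ((descPochhammer ℝ k).eval a / (descPochhammer ℝ k).eval b) ∧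
    Real.log ((descPochhammer ℝ k).eval a / (descPochhammer ℝ k).eval b) ≤
        (k : ℝ) * Real.log ((a - (k : ℝ)) / (b - (k : ℝ))) ∧
    (k : ℝ) * Real.log ((a - (k : ℝ)) / (b - (k : ℝ))) ≤
        (k : ℝ) * Real.log (a / b) / (1 - (k : ℝ) / b) := by
  have hb : 0 < b := (Nat.cast_nonneg k).trans_lt hbk
  have hratio := monotoneOn_sub_div_sub hab
  have hterm : ∀ i ∈ range k, log (a / b) ≤ log ((a - i) / (b - i)) ∧
      log ((a - i) / (b - i)) ≤ log ((a - k) / (b - k)) := by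
    intro i hi
    have hik : (i : ℝ) ≤ k := by exact_mod_cast (mem_range.1 hi).le
    have hib : (i : ℝ) < b := hik.trans_lt hbk
    have hbound₀ := hratio (Set.mem_Iio.2 hb) (Set.mem_Iio.2 hib) (Nat.cast_nonneg i)
    have hbound₁ := hratio (Set.mem_Iio.2 hib) (Set.mem_Iio.2 hbk) hik
    simp only [sub_zero] at hbound₀ hbound₁
    have hpos : 0 < a / b := div_pos (hb.trans_le hab) hb
    exact ⟨log_le_log hpos hbound₀, log_le_log (hpos.trans_le hbound₀) hbound₁⟩
  rw [log_descPochhammer_eval_div_eq_sum (by linarith) hab]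
  refine ⟨?_, ?_, mul_log_sub_div_sub_le (Nat.cast_nonneg k) hbk hab⟩
  · simpa using card_nsmul_le_sum (range k) _ _ fun i hi => (hterm i hi).1
  · simpa using sum_le_card_nsmul (range k) _ _ fun i hi => (hterm i hi).2

/-- Gao–Wormald inequality: for real `a ≥ b > k > 0` with `k` an integer,
`k ln(a/b) ≤ ln((a)_k/(b)_k) ≤ k ln((a-k)/(b-k)) ≤ k ln(a/b)/(1 - k/b)`. -/
theorem stmt_10 (a b : ℝ) (k : ℕ) (hk : 0 < k) (hbk : (k : ℝ) < b) (hab : b ≤ a) :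
    (k : ℝ) * Real.log (a / b) ≤
        Real.log ((descPochhammer ℝ k).eval a / (descPochhammer ℝ k).eval b) ∧
    Real.log ((descPochhammer ℝ k).eval a / (descPochhammer ℝ k).eval b) ≤
        (k : ℝ) * Real.log ((a - (k : ℝ)) / (b - (k : ℝ))) ∧
    (k : ℝ) * Real.log ((a - (k : ℝ)) / (b - (k : ℝ))) ≤
        (k : ℝ) * Real.log (a / b) / (1 - (k : ℝ) / b) :=
  stmt_10_general a b k hbk hab
end

section
/- For a bridge x = (x(0), …, x(k)) with x(0) = 0, x(k) = −1 and all increments ≥ −1, the Vervaat transform V(x) (the cyclic shift starting at the first time x attains its overall minimum) is an excursion: V(x)(0) = 0, V(x) has all increments ≥ −1, V(x)(j) ≥ 0 for 0 ≤ j ≤ k−1, and V(x)(k) = −1. -/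
/-!
Cut the bridge at `τ`. Up to the end of the original walk, the rotated walk at time `j` sits at
`x(τ + j) - x(τ) ≥ 0` because `τ` is a minimum time. After wrapping around it sits at
`-1 - x(τ) + x(m)` with `1 ≤ m < τ`, and `x(m) > x(τ)` (strictly, as `τ` is the *first* minimum
time) gives `x(m) - x(τ) ≥ 1` over `ℤ`.
-/

/-- Partial sum: the position after `j` steps of the walk with increment list `s`. -/
def psum (s : List ℤ) (j : ℕ) : ℤ := (s.take j).sum

namespace List

theorem psum_zero (l : List ℤ) : psum l 0 = 0 := by
  simp [psum]

theorem psum_of_length_le {l : List ℤ} {j : ℕ} (h : l.length ≤ j) : psum l j = l.sum := by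
  rw [psum, take_of_length_le h]

theorem psum_append (l₁ l₂ : List ℤ) (j : ℕ) :
    psum (l₁ ++ l₂) j = psum l₁ j + psum l₂ (j - l₁.length) := by
  rw [psum, take_append, sum_append, psum, psum]

theorem psum_add (l : List ℤ) (i j : ℕ) : psum l (i + j) = psum l i + psum (l.drop i) j := by
  rw [psum, take_add, sum_append, psum, psum]

theorem psum_take {l : List ℤ} {i j : ℕ} (h : j ≤ i) : psum (l.take i) j = psum l j := by
  rw [psum, take_take, min_eq_left h, psum]

variable {s : List ℤ} {τ j : ℕ}

theorem psum_rotate_of_le_sub (hτ : τ ≤ s.length) (hj : j ≤ s.length - τ) :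
    psum (s.rotate τ) j = psum s (τ + j) - psum s τ := by
  rw [rotate_eq_drop_append_take hτ, psum_append, length_drop,
    Nat.sub_eq_zero_of_le hj, psum_zero, psum_add s τ j]
  ring

theorem psum_rotate_of_sub_le (hτ : τ ≤ s.length) (hj₁ : s.length - τ ≤ j)
    (hj₂ : j ≤ s.length) :
    psum (s.rotate τ) j = s.sum - psum s τ + psum s (j - (s.length - τ)) := by
  have hdrop : psum (s.drop τ) j = s.sum - psum s τ := by
    rw [eq_sub_iff_add_eq', ← psum_add, psum_of_length_le (by omega)]
  rw [rotate_eq_drop_append_take hτ, psum_append, length_drop, hdrop, psum_take (by omega)]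

end List

theorem stmt_16_general (k : ℕ) (s : List ℤ) (hlen : s.length = k)
    (hinc : ∀ a ∈ s, -1 ≤ a) (hsum : s.sum = -1)
    (τ : ℕ) (hτ1 : 1 ≤ τ) (hτk : τ ≤ k)
    (hmin : ∀ j, 1 ≤ j → j ≤ k → psum s τ ≤ psum s j)
    (hfirst : ∀ j, 1 ≤ j → j < τ → psum s τ < psum s j) :
    (∀ a ∈ s.rotate τ, -1 ≤ a) ∧
    (∀ j, j < k → 0 ≤ psum (s.rotate τ) j) ∧
    (s.rotate τ).sum = -1 := by
  subst hlen
  have hperm := s.rotate_perm τ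
  refine ⟨fun a ha => hinc a (hperm.mem_iff.mp ha), fun j hj => ?_, by rw [hperm.sum_eq, hsum]⟩
  rcases le_or_gt j (s.length - τ) with hj' | hj'
  · rw [List.psum_rotate_of_le_sub hτk hj']
    linarith [hmin (τ + j) (by omega) (by omega)]
  · rw [List.psum_rotate_of_sub_le hτk hj'.le hj.le, hsum]
    linarith [hfirst (j - (s.length - τ)) (by omega) (by omega)]

/-- Vervaat's transformation: if `s` is the increment list of a bridge of length `k ≥ 1`
(all increments `≥ -1`, total sum `-1`) and `τ` is the first time the walk attains its
overall minimum, then the cyclic shift `s.rotate τ` is the increment list of an excursion: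
increments `≥ -1`, all partial sums before time `k` non-negative, and total sum `-1`. -/
theorem stmt_16 (k : ℕ) (hk : 1 ≤ k) (s : List ℤ) (hlen : s.length = k)
    (hinc : ∀ a ∈ s, -1 ≤ a) (hsum : s.sum = -1)
    (τ : ℕ) (hτ1 : 1 ≤ τ) (hτk : τ ≤ k)
    (hmin : ∀ j, 1 ≤ j → j ≤ k → psum s τ ≤ psum s j)
    (hfirst : ∀ j, 1 ≤ j → j < τ → psum s τ < psum s j) :
    (∀ a ∈ s.rotate τ, -1 ≤ a) ∧
    (∀ j, j < k → 0 ≤ psum (s.rotate τ) j) ∧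
    (s.rotate τ).sum = -1 :=
  stmt_16_general k s hlen hinc hsum τ hτ1 hτk hmin hfirst
end
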